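/- arXiv:1209.1131 — 4 statements merged into one kernel-verified Lean document; each statement's English description precedes it below -/
import Mathlib

section
/- Let p be an odd prime and let A = {−(p−1)/2, −(p−3)/2, …, (p−1)/2} viewed as a subset of Z/p²Z. Then the number of ordered pairs (a,b) ∈ A × A with a + b (mod p²) not in A is exactly (p² − 1)/4. Hence the probability of a carry when adding two uniform independent balanced digits base p is (p² − 1)/(4p²). -/
/-!
Write p = 2k + 1, so the balanced digits are the images of the integers -k, …, k. Sums of two
digits lie in [-2k, 2k], and 4k < p², so reduction mod p² is injective there: a carry in
Z/p²Z is the same as an integer sum leaving [-k, k]. For a fixed first digit i exactly |i|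
second digits produce a carry, and ∑_{|i| ≤ k} |i| = k(k + 1) = (p² - 1)/4.
-/

open Finset

theorem card_filter_add_notMem_image_of_injOn {G H : Type*} [AddZeroClass G] [AddZeroClass H]
    [DecidableEq G] [DecidableEq H] (f : G →+ H) (S : Finset G) (T : Set G)
    (hS : ↑S ⊆ T) (hST : ∀ i ∈ S, ∀ j ∈ S, i + j ∈ T) (hf : Set.InjOn f T) :
    ((S.image f ×ˢ S.image f).filter (fun ab => ab.1 + ab.2 ∉ S.image f)).card =
      ((S ×ˢ S).filter (fun ij => ij.1 + ij.2 ∉ S)).card := by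
  have hmem : ∀ i ∈ S, ∀ j ∈ S, f (i + j) ∈ S.image f ↔ i + j ∈ S := fun i hi j hj =>
    ⟨fun h => by
      obtain ⟨s, hs, hfs⟩ := mem_image.mp h
      rwa [← hf (hS hs) (hST i hi j hj) hfs],
    mem_image_of_mem f⟩
  have himage : (S.image f ×ˢ S.image f).filter (fun ab => ab.1 + ab.2 ∉ S.image f) =
      ((S ×ˢ S).filter (fun ij => ij.1 + ij.2 ∉ S)).image (Prod.map f f) := by
    rw [← prodMap_image_product, filter_image]
    refine congrArg _ (filter_congr fun ij hij => ?_)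
    rw [mem_product] at hij
    simp only [Prod.map_fst, Prod.map_snd, ← map_add, hmem _ hij.1 _ hij.2]
  rw [himage, card_image_of_injOn]
  rintro ⟨i, j⟩ hij ⟨i', j'⟩ hij' heq
  simp only [coe_filter, mem_product, Set.mem_ofPred_eq] at hij hij'
  simp only [Prod.map, Prod.mk.injEq] at heq ⊢
  exact ⟨hf (hS hij.1.1) (hS hij'.1.1) heq.1, hf (hS hij.1.2) (hS hij'.1.2) heq.2⟩

theorem card_filter_add_notMem_Icc_neg_eq_natAbs (k : ℤ) {i : ℤ} (hi : i ∈ Icc (-k) k) :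
    ((Icc (-k) k).filter (fun j => i + j ∉ Icc (-k) k)).card = i.natAbs := by
  rw [mem_Icc] at hi
  rcases le_total 0 i with hi0 | hi0
  · have hfiber : (Icc (-k) k).filter (fun j => i + j ∉ Icc (-k) k) = Ioc (k - i) k := by
      ext j; simp only [mem_filter, mem_Icc, mem_Ioc]; omega
    rw [hfiber, Int.card_Ioc]; omega
  · have hfiber : (Icc (-k) k).filter (fun j => i + j ∉ Icc (-k) k) = Ico (-k) (-k - i) := by
      ext j; simp only [mem_filter, mem_Icc, mem_Ico]; omega
    rw [hfiber, Int.card_Ico]; omega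

theorem sum_natAbs_Icc_neg (n : ℕ) : ∑ i ∈ Icc (-(n : ℤ)) n, i.natAbs = n * (n + 1) := by
  induction n with
  | zero => simp
  | succ n ih =>
    have hIcc : Icc (-((n + 1 : ℕ) : ℤ)) (n + 1 : ℕ) =
        insert (-(n + 1 : ℤ)) (insert ((n : ℤ) + 1) (Icc (-(n : ℤ)) n)) := by
      ext j; simp only [mem_insert, mem_Icc]; omega
    rw [hIcc, sum_insert (by simp only [mem_insert, mem_Icc]; omega),
      sum_insert (by simp only [mem_Icc]; omega), ih, Int.natAbs_neg,
      show ((n : ℤ) + 1).natAbs = n + 1 by omega]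
    ring

theorem card_filter_add_notMem_Icc_neg_product (k : ℕ) :
    ((Icc (-(k : ℤ)) k ×ˢ Icc (-(k : ℤ)) k).filter
      (fun ij => ij.1 + ij.2 ∉ Icc (-(k : ℤ)) k)).card = k * (k + 1) := by
  rw [card_filter, sum_product]
  simp_rw [← card_filter]
  rw [← sum_natAbs_Icc_neg k]
  exact sum_congr rfl fun i hi => card_filter_add_notMem_Icc_neg_eq_natAbs k hi

theorem ZMod.intCast_injOn_Icc {m : ℕ} {r : ℤ} (h : 2 * r < m) :
    Set.InjOn (Int.cast : ℤ → ZMod m) (Set.Icc (-r) r) := by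
  intro i hi j hj hij
  rw [ZMod.intCast_eq_intCast_iff_dvd_sub] at hij
  have hsub : j - i = 0 := Int.eq_zero_of_abs_lt_dvd hij (by
    rw [abs_lt]; simp only [Set.mem_Icc] at hi hj; constructor <;> linarith)
  omega

theorem ZMod.card_filter_add_notMem_balanced (k m : ℕ) (h : 4 * k < m) :
    let A : Finset (ZMod m) := (Icc (-(k : ℤ)) k).image (Int.cast : ℤ → ZMod m)
    ((A ×ˢ A).filter (fun ab => ab.1 + ab.2 ∉ A)).card = k * (k + 1) := by
  rw [← card_filter_add_notMem_Icc_neg_product k]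
  refine card_filter_add_notMem_image_of_injOn (Int.castAddHom (ZMod m)) _ (Set.Icc (-(2 * k)) (2 * k))
    ?_ ?_ (ZMod.intCast_injOn_Icc (by omega))
  · intro i hi
    simp only [coe_Icc, Set.mem_Icc] at hi ⊢
    omega
  · intro i hi j hj
    simp only [mem_Icc, Set.mem_Icc] at hi hj ⊢
    omega

theorem balanced_digits_carry_count_and_prob_general (p : ℕ) (hodd : Odd p)
    (A : Finset (ZMod (p ^ 2)))
    (hA : A = (Finset.Icc (-(((p : ℤ) - 1) / 2)) (((p : ℤ) - 1) / 2)).image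
      (fun i : ℤ => (i : ZMod (p ^ 2)))) :
    ((A ×ˢ A).filter (fun ab => ab.1 + ab.2 ∉ A)).card = (p ^ 2 - 1) / 4 ∧
    (((A ×ˢ A).filter (fun ab => ab.1 + ab.2 ∉ A)).card : ℚ) / (p ^ 2 : ℚ) =
      ((p : ℚ) ^ 2 - 1) / (4 * (p : ℚ) ^ 2) := by
  obtain ⟨k, rfl⟩ := hodd
  have hsq : (2 * k + 1) ^ 2 = 4 * (k * (k + 1)) + 1 := by ring
  have hcount : ((A ×ˢ A).filter (fun ab => ab.1 + ab.2 ∉ A)).card = k * (k + 1) := by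
    have hk : ((((2 * k + 1 : ℕ) : ℤ) - 1) / 2) = k := by omega
    rw [hA, hk]
    exact ZMod.card_filter_add_notMem_balanced k _ (by rw [hsq]; nlinarith)
  refine ⟨by rw [hcount, hsq]; omega, ?_⟩
  rw [hcount]
  field_simp
  push_cast
  ring

theorem balanced_digits_carry_count_and_prob (p : ℕ) (hp : p.Prime) (hodd : Odd p)
    (A : Finset (ZMod (p ^ 2)))
    (hA : A = (Finset.Icc (-(((p : ℤ) - 1) / 2)) (((p : ℤ) - 1) / 2)).image
      (fun i : ℤ => (i : ZMod (p ^ 2)))) :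
    ((A ×ˢ A).filter (fun ab => ab.1 + ab.2 ∉ A)).card = (p ^ 2 - 1) / 4 ∧
    (((A ×ˢ A).filter (fun ab => ab.1 + ab.2 ∉ A)).card : ℚ) / (p ^ 2 : ℚ) =
      ((p : ℚ) ^ 2 - 1) / (4 * (p : ℚ) ^ 2) :=
  balanced_digits_carry_count_and_prob_general p hodd A hA
end

section
/- Let p be an odd prime, A' = {−(p−1)/2, …, (p−1)/2} ⊆ Z/p²Z the balanced digit set, k ≥ 1, and n'_k(x) the number of ordered k-tuples of elements of A' summing to x in Z/p²Z. Then n'_k, viewed as a function on the integer representatives in (−p²/2, p²/2), is a non-increasing function of |x| (i.e., if |x| ≤ |y| ≤ (p²−1)/2 then n'_k(x) ≥ n'_k(y)). -/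
/-!
The count for `k + 1` digits is the convolution of the count for `k` digits with the indicator
of the digit window `[-l, l]`, `l = (p - 1) / 2`. For any odd modulus `N ≥ 2l + 1`, such a
convolution preserves being even and non-increasing in `|x|` on balanced representatives: sliding
the window from `x` to `x + 1` trades the term at `x - l` for the term at `x + l + 1`, whose
balanced representative is at least as far from `0`. Induction from the point mass at `0` gives
the claim, here with `N = p²`.
-/

open Finset

theorem Finset.sum_Icc_add_one_add {M : Type*} [AddCommMonoid M] (f : ℤ → M) {a b : ℤ}
    (hab : a ≤ b + 1) :
    ∑ i ∈ Icc (a + 1) (b + 1), f i + f a = ∑ i ∈ Icc a b, f i + f (b + 1) := by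
  rw [add_comm _ (f a), ← sum_insert (by simp), insert_Icc_add_one_left_eq_Icc hab,
    add_comm _ (f (b + 1)), ← sum_insert (by simp), insert_Icc_right_eq_Icc_add_one hab]

theorem Finset.sum_Icc_neg_sub_eq_sum_Icc {M R : Type*} [AddCommMonoid M] [Ring R] (g : R → M)
    (x l : ℤ) :
    ∑ j ∈ Icc (-l) l, g ((x : R) - j) = ∑ i ∈ Icc (x - l) (x + l), g i := by
  refine sum_nbij' (x - ·) (x - ·) ?_ ?_ (by simp) (by simp) (by simp)
  all_goals intro j hj; rw [mem_Icc] at *; omega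

theorem ZMod.valMinAbs_intCast_of_two_mul_abs_lt {N : ℕ} {i : ℤ} (hi : 2 * |i| < N) :
    (i : ZMod N).valMinAbs = i := by
  have : NeZero N := ⟨by have := abs_nonneg i; omega⟩
  refine (ZMod.valMinAbs_spec _ _).2 ⟨rfl, ?_, ?_⟩ <;> cases abs_cases i <;> linarith

theorem ZMod.intCast_injOn_Icc_s6 {N : ℕ} {l : ℤ} (hl : 2 * l < N) :
    Set.InjOn (Int.cast : ℤ → ZMod N) (Set.Icc (-l) l) := by
  intro i hi j hj hij
  have habs : ∀ r ∈ Set.Icc (-l) l, 2 * |r| < N := fun r hr => by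
    rw [Set.mem_Icc] at hr; cases abs_cases r <;> linarith
  rw [← ZMod.valMinAbs_intCast_of_two_mul_abs_lt (habs i hi),
    ← ZMod.valMinAbs_intCast_of_two_mul_abs_lt (habs j hj), hij]

variable {β : Type*} {N : ℕ}

def BalancedAntitone [Preorder β] (N : ℕ) (g : ZMod N → β) : Prop :=
  ∀ x y : ℤ, |x| ≤ |y| → |y| ≤ ((N : ℤ) - 1) / 2 → g y ≤ g x

theorem BalancedAntitone.apply_neg [PartialOrder β] {g : ZMod N → β} (hN : Odd N)
    (hg : BalancedAntitone N g) (z : ZMod N) : g (-z) = g z := by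
  obtain ⟨m, rfl⟩ := hN
  have hr : |z.valMinAbs| ≤ (((2 * m + 1 : ℕ) : ℤ) - 1) / 2 := by
    have := z.natAbs_valMinAbs_le
    rw [Int.abs_eq_natAbs]
    omega
  rw [← z.coe_valMinAbs, ← Int.cast_neg]
  exact le_antisymm (hg _ _ (abs_neg _).ge (by rwa [abs_neg])) (hg _ _ (abs_neg _).le hr)

theorem balancedAntitone_of_apply_neg [Preorder β] {g : ZMod N → β}
    (hneg : ∀ z, g (-z) = g z)
    (hstep : ∀ x : ℤ, 0 ≤ x → x + 1 ≤ ((N : ℤ) - 1) / 2 →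
      g ((x + 1 : ℤ) : ZMod N) ≤ g x) :
    BalancedAntitone N g := by
  have hanti : AntitoneOn (fun x : ℤ => g x) (Set.Icc 0 (((N : ℤ) - 1) / 2)) :=
    antitoneOn_of_add_one_le Set.ordConnected_Icc fun x _ hx hx1 => hstep x hx.1 hx1.2
  have habs : ∀ x : ℤ, g x = g (|x| : ℤ) := fun x => by
    rcases abs_choice x with h | h <;> rw [h]
    rw [Int.cast_neg, hneg]
  intro x y hxy hy
  rw [habs x, habs y]
  exact hanti ⟨abs_nonneg x, hxy.trans hy⟩ ⟨abs_nonneg y, hy⟩ hxy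

theorem BalancedAntitone.apply_add_add_one_le [Preorder β] {g : ZMod N → β} (hN : Odd N)
    (hg : BalancedAntitone N g) {l x : ℤ} (hl : 0 ≤ l) (hlN : 2 * l + 1 ≤ N) (hx : 0 ≤ x)
    (hxN : x + 1 ≤ ((N : ℤ) - 1) / 2) :
    g ((x + l + 1 : ℤ) : ZMod N) ≤ g ((x - l : ℤ) : ZMod N) := by
  obtain ⟨m, rfl⟩ := hN
  push_cast at hlN hxN
  by_cases hw : x + l + 1 ≤ m
  · refine hg _ _ ?_ ?_ <;> rw [abs_of_nonneg (by omega : 0 ≤ x + l + 1)]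
    · rw [abs_le]; omega
    · push_cast; omega
  · -- past the balanced range, `x + l + 1` is represented by `x + l + 1 - N < 0`
    have hwrap :
        ((x + l + 1 - (2 * m + 1 : ℕ) : ℤ) : ZMod (2 * m + 1)) = (x + l + 1 : ℤ) := by
      rw [Int.cast_sub, Int.cast_natCast, ZMod.natCast_self, sub_zero]
    rw [← hwrap]
    refine hg _ _ ?_ ?_ <;> rw [abs_of_neg (by omega : x + l + 1 - (2 * m + 1 : ℕ) < 0)]
    · rw [abs_le]; omega
    · push_cast; omega

theorem BalancedAntitone.sum_Icc_sub [AddCommMonoid β] [PartialOrder β]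
    [IsOrderedCancelAddMonoid β] {g : ZMod N → β} (hN : Odd N) (hg : BalancedAntitone N g)
    {l : ℤ} (hl : 0 ≤ l) (hlN : 2 * l + 1 ≤ N) :
    BalancedAntitone N (fun z => ∑ j ∈ Icc (-l) l, g (z - j)) := by
  refine balancedAntitone_of_apply_neg (fun z => ?_) (fun x hx hxN => ?_)
  · refine sum_nbij' (- ·) (- ·) ?_ ?_ (by simp) (by simp) fun j _ => ?_
    · intro j hj; rw [mem_Icc] at *; omega
    · intro j hj; rw [mem_Icc] at *; omega
    · rw [← hg.apply_neg hN]
      congr 1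
      push_cast
      ring
  · have hslide := sum_Icc_add_one_add (fun i : ℤ => g i) (a := x - l) (b := x + l) (by omega)
    simp only [sum_Icc_neg_sub_eq_sum_Icc]
    rw [show x + 1 - l = x - l + 1 by ring, show x + 1 + l = x + l + 1 by ring]
    exact le_of_add_le_add_right
      (hslide.trans_le (add_le_add_right (hg.apply_add_add_one_le hN hl hlN hx hxN) _))

section
variable {G : Type*} [DecidableEq G]

def tupleSumCount [AddCommMonoid G] (A : Finset G) (k : ℕ) (z : G) : ℕ :=
  #{f ∈ Fintype.piFinset (fun _ : Fin k => A) | ∑ i, f i = z}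

theorem tupleSumCount_zero [AddCommMonoid G] (A : Finset G) (z : G) :
    tupleSumCount A 0 z = if z = 0 then 1 else 0 := by
  simp only [tupleSumCount, univ_eq_empty, sum_empty, eq_comm (a := (0 : G))]
  split_ifs <;> simp [*]

theorem tupleSumCount_succ [AddCommGroup G] (A : Finset G) (k : ℕ) (z : G) :
    tupleSumCount A (k + 1) z = ∑ a ∈ A, tupleSumCount A k (z - a) := by
  have hcons := map_consEquiv_filter_piFinset (fun _ : Fin (k + 1) => A) (fun _ => True)
  simp only [filter_true_of_mem, implies_true] at hcons
  rw [tupleSumCount, ← card_map (Fin.consEquiv fun _ => G).symm.toEmbedding, map_filter, hcons]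
  simp only [tupleSumCount, card_filter, sum_product]
  refine sum_congr rfl fun a _ => sum_congr rfl fun f _ => ?_
  simp [Fin.sum_univ_succ, eq_sub_iff_add_eq, add_comm]
end

theorem balancedAntitone_tupleSumCount_zero (A : Finset (ZMod N)) :
    BalancedAntitone N (tupleSumCount A 0) := by
  intro x y hxy hy
  have hy0 : (y : ZMod N) = 0 → x = 0 := fun h => by
    have hlt : 2 * |y| < N := by omega
    rw [← ZMod.valMinAbs_intCast_of_two_mul_abs_lt hlt, h, ZMod.valMinAbs_zero] at hxy
    exact abs_nonpos_iff.1 hxy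
  rw [tupleSumCount_zero, tupleSumCount_zero]
  split_ifs with h <;> simp_all

theorem balancedAntitone_tupleSumCount_Icc (hN : Odd N) {l : ℤ} (hl : 0 ≤ l)
    (hlN : 2 * l + 1 ≤ N) (k : ℕ) :
    BalancedAntitone N (tupleSumCount ((Icc (-l) l).image (Int.cast : ℤ → ZMod N)) k) := by
  induction k with
  | zero => exact balancedAntitone_tupleSumCount_zero _
  | succ k ih =>
    have hinj : Set.InjOn (Int.cast : ℤ → ZMod N) (Icc (-l) l) := by
      simpa using ZMod.intCast_injOn_Icc_s6 (by omega : 2 * l < N)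
    have hrec : tupleSumCount ((Icc (-l) l).image (Int.cast : ℤ → ZMod N)) (k + 1) =
        fun z => ∑ j ∈ Icc (-l) l, tupleSumCount _ k (z - (j : ZMod N)) :=
      funext fun z => by rw [tupleSumCount_succ, sum_image hinj]
    rw [hrec]
    exact ih.sum_Icc_sub hN hl hlN

theorem balanced_rep_count_monotone_general (p : ℕ) (hodd : Odd p)
    (k : ℕ)
    (A' : Finset (ZMod (p ^ 2)))
    (hA' : A' = (Finset.Icc (-(((p : ℤ) - 1) / 2)) (((p : ℤ) - 1) / 2)).image
      (fun i : ℤ => (i : ZMod (p ^ 2))))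
    (n' : ZMod (p ^ 2) → ℕ)
    (hn' : ∀ z, n' z = ((Fintype.piFinset (fun _ : Fin k => A')).filter
      (fun f => ∑ i, f i = z)).card)
    (x y : ℤ) (hxy : |x| ≤ |y|) (hy : |y| ≤ ((p : ℤ) ^ 2 - 1) / 2) :
    n' ((y : ZMod (p ^ 2))) ≤ n' ((x : ZMod (p ^ 2))) := by
  obtain rfl : n' = tupleSumCount A' k := funext hn'
  subst hA'
  have hp : 1 ≤ p := hodd.pos
  have hp2 : (p : ℤ) ≤ p ^ 2 := by nlinarith
  exact balancedAntitone_tupleSumCount_Icc hodd.pow (by omega) (by push_cast; omega) k x y hxy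
    (by exact_mod_cast hy)

theorem balanced_rep_count_monotone (p : ℕ) [NeZero p] (hp : p.Prime) (hodd : Odd p)
    (k : ℕ) (hk : 1 ≤ k)
    (A' : Finset (ZMod (p ^ 2)))
    (hA' : A' = (Finset.Icc (-(((p : ℤ) - 1) / 2)) (((p : ℤ) - 1) / 2)).image
      (fun i : ℤ => (i : ZMod (p ^ 2))))
    (n' : ZMod (p ^ 2) → ℕ)
    (hn' : ∀ z, n' z = ((Fintype.piFinset (fun _ : Fin k => A')).filter
      (fun f => ∑ i, f i = z)).card)
    (x y : ℤ) (hxy : |x| ≤ |y|) (hy : |y| ≤ ((p : ℤ) ^ 2 - 1) / 2) :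
    n' ((y : ZMod (p ^ 2))) ≤ n' ((x : ZMod (p ^ 2))) :=
  balanced_rep_count_monotone_general p hodd k A' hA' n' hn' x y hxy hy
end

section
/- For an odd integer b ≥ 3, if two one-digit numbers are chosen independently and uniformly from the balanced digit set {−(b−1)/2, …, (b−1)/2}, the probability that their integer sum has absolute value exceeding (b−1)/2 equals (b² − 1)/(4b²). -/
open Finset

lemma inner_card (m x : ℤ) (hm : 0 ≤ m) (hx : x ∈ Finset.Icc (-m) m) :
    ((Finset.Icc (-m) m).filter fun y => m < |x + y|).card = x.natAbs := by
  simp only [Finset.mem_Icc] at hx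
  have hset : ((Finset.Icc (-m) m).filter fun y => m < |x + y|) =
      (Finset.Icc (m + 1 - x) m) ∪ (Finset.Icc (-m) (-m - 1 - x)) := by
    ext y
    simp only [Finset.mem_filter, Finset.mem_Icc, Finset.mem_union, lt_abs]
    omega
  rw [hset, Finset.card_union_of_disjoint, Int.card_Icc, Int.card_Icc]
  · omega
  · rw [Finset.disjoint_left]
    intro y hy hy'
    simp only [Finset.mem_Icc] at hy hy'
    omega

lemma sum_natAbs (n : ℕ) :
    ∑ x ∈ Finset.Icc (-(n : ℤ)) n, x.natAbs = n * (n + 1) := by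
  induction n with
  | zero => simp
  | succ n ih =>
    have h1 : Finset.Icc (-((n : ℤ) + 1)) ((n : ℤ) + 1) =
        insert (-((n : ℤ) + 1)) (insert ((n : ℤ) + 1) (Finset.Icc (-(n : ℤ)) n)) := by
      ext y
      simp only [Finset.mem_Icc, Finset.mem_insert]
      omega
    push_cast
    rw [h1, Finset.sum_insert, Finset.sum_insert, ih]
    · have h2 : ((n : ℤ) + 1).natAbs = n + 1 := by omega
      have h3 : (-((n : ℤ) + 1)).natAbs = n + 1 := by omega
      rw [h2, h3]; ring
    · simp only [Finset.mem_Icc]; omega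
    · simp only [Finset.mem_insert, Finset.mem_Icc]; omega

theorem balanced_carry_prob (b : ℕ) (hb : 3 ≤ b) (hodd : Odd b) :
    ((((Finset.Icc (-(((b : ℤ) - 1) / 2)) (((b : ℤ) - 1) / 2)) ×ˢ
        (Finset.Icc (-(((b : ℤ) - 1) / 2)) (((b : ℤ) - 1) / 2))).filter
      (fun xy => ((b : ℤ) - 1) / 2 < |xy.1 + xy.2|)).card : ℚ) / (b : ℚ) ^ 2 =
    ((b : ℚ) ^ 2 - 1) / (4 * (b : ℚ) ^ 2) := by
  obtain ⟨n, hn⟩ := hodd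
  have hm : (((b : ℤ) - 1) / 2) = (n : ℤ) := by subst hn; push_cast; omega
  have hcard : (((Finset.Icc (-(((b : ℤ) - 1) / 2)) (((b : ℤ) - 1) / 2)) ×ˢ
        (Finset.Icc (-(((b : ℤ) - 1) / 2)) (((b : ℤ) - 1) / 2))).filter
      (fun xy => ((b : ℤ) - 1) / 2 < abs (xy.1 + xy.2))).card = n * (n + 1) := by
    rw [hm, Finset.card_filter, Finset.sum_product]
    have step : ∀ x ∈ Finset.Icc (-(n : ℤ)) (n : ℤ),
        (∑ y ∈ Finset.Icc (-(n : ℤ)) (n : ℤ), if (n : ℤ) < |x + y| then 1 else 0) = x.natAbs := by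
      intro x hx
      rw [← Finset.card_filter]
      exact inner_card (n : ℤ) x (by positivity) hx
    rw [Finset.sum_congr rfl step]
    exact sum_natAbs n
  rw [hcard]
  have hb' : (b : ℚ) = 2 * n + 1 := by subst hn; push_cast; ring
  have hbne : (b : ℚ) ≠ 0 := by positivity
  rw [hb']
  push_cast
  have : (2 * (n : ℚ) + 1) ≠ 0 := by positivity
  field_simp
  ring
end

section
/- Let p be an odd prime and A' = {−(p−1)/2, …, (p−1)/2} ⊆ Z. For every k ≥ 1 and every g ∈ A', the number of ordered k-tuples from A' summing to g is at least the number of ordered k-tuples from A' summing to (p−1)/2. -/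
/-!
Write `N_k(s)` for the number of `k`-tuples from `[-m, m]` with sum `s`. Splitting off the first
coordinate gives `N_{k+1}(s) = ∑_{t ∈ [s - m, s + m]} N_k(t)`, so sliding the window gives
`N_{k+1}(s + 1) - N_{k+1}(s) = N_k(s + 1 + m) - N_k(s - m)`. Since `N_k` is even and,
by induction, antitone on `[0, ∞)`, this is `≤ 0` for `s ≥ 0` because `|s - m| ≤ s + 1 + m`.
Hence `N_k(s)` decreases in `|s|`, and `|g| ≤ m` gives the claim.
-/

open Finset

noncomputable def boxSumCount (m : ℤ) (k : ℕ) (s : ℤ) : ℕ :=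
  ((Fintype.piFinset (fun _ : Fin k => Icc (-m) m)).filter (fun f => ∑ i, f i = s)).card

theorem boxSumCount_neg (m : ℤ) (k : ℕ) (s : ℤ) :
    boxSumCount m k (-s) = boxSumCount m k s := by
  refine card_nbij' (fun f i => -f i) (fun f i => -f i) ?_ ?_
    (fun f _ => by simp) (fun f _ => by simp) <;>
  · intro f hf
    simp only [coe_filter, Fintype.mem_piFinset, mem_Icc, Set.mem_ofPred_eq,
      sum_neg_distrib] at hf ⊢
    exact ⟨fun i => ⟨neg_le_neg (hf.1 i).2, neg_le.mp (hf.1 i).1⟩, by omega⟩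

theorem boxSumCount_abs (m : ℤ) (k : ℕ) (s : ℤ) :
    boxSumCount m k |s| = boxSumCount m k s := by
  rcases abs_choice s with h | h <;> rw [h]
  exact boxSumCount_neg m k s

theorem boxSumCount_zero (m s : ℤ) : boxSumCount m 0 s = if s = 0 then 1 else 0 := by
  split_ifs with h <;> simp [boxSumCount, h, eq_comm]

theorem boxSumCount_succ (m : ℤ) (k : ℕ) (s : ℤ) :
    boxSumCount m (k + 1) s = ∑ d ∈ Icc (-m) m, boxSumCount m k (s - d) := by
  simp only [boxSumCount]
  rw [← card_sigma]
  refine card_nbij' (fun f => ⟨f 0, Fin.tail f⟩) (fun x => Fin.cons x.1 x.2) ?_ ?_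
    (fun f _ => Fin.cons_self_tail f) (fun x _ => by simp)
  · intro f hf
    simp only [coe_filter, Fintype.mem_piFinset, Set.mem_ofPred_eq, Fin.sum_univ_succ] at hf
    simp only [coe_sigma, Set.mem_sigma_iff, mem_coe, mem_filter, Fintype.mem_piFinset]
    exact ⟨hf.1 0, fun i => hf.1 i.succ, by rw [← hf.2]; simp [Fin.tail]⟩
  · rintro ⟨d, f⟩ hx
    simp only [coe_sigma, Set.mem_sigma_iff, mem_coe, mem_filter, Fintype.mem_piFinset] at hx
    simp only [coe_filter, Fintype.mem_piFinset, Set.mem_ofPred_eq, Fin.sum_univ_succ,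
      Fin.cons_zero, Fin.cons_succ]
    exact ⟨Fin.cases hx.1 hx.2.1, by omega⟩

theorem boxSumCount_succ_eq_sum_Icc (m : ℤ) (k : ℕ) (s : ℤ) :
    boxSumCount m (k + 1) s = ∑ t ∈ Icc (s - m) (s + m), boxSumCount m k t := by
  rw [boxSumCount_succ]
  refine sum_nbij' (s - ·) (s - ·) ?_ ?_ (fun _ _ => by simp) (fun _ _ => by simp)
    (fun _ _ => rfl) <;>
  · intro d hd
    simp only [mem_Icc] at hd ⊢
    omega

theorem boxSumCount_succ_add_one_add (m : ℤ) (hm : 0 ≤ m) (k : ℕ) (s : ℤ) :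
    boxSumCount m (k + 1) (s + 1) + boxSumCount m k (s - m) =
      boxSumCount m (k + 1) s + boxSumCount m k (s + 1 + m) := by
  have hright : Icc (s + 1 - m) (s + 1 + m) = insert (s + 1 + m) (Icc (s + 1 - m) (s + m)) := by
    ext; simp only [mem_Icc, mem_insert]; omega
  have hleft : Icc (s - m) (s + m) = insert (s - m) (Icc (s + 1 - m) (s + m)) := by
    ext; simp only [mem_Icc, mem_insert]; omega
  rw [boxSumCount_succ_eq_sum_Icc, boxSumCount_succ_eq_sum_Icc, hright, hleft,
    sum_insert (by simp), sum_insert (by simp)]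
  ring

theorem boxSumCount_antitoneOn_Ici_zero (m : ℤ) (hm : 0 ≤ m) (k : ℕ) :
    AntitoneOn (boxSumCount m k) (Set.Ici 0) := by
  induction k with
  | zero =>
    refine antitoneOn_of_add_one_le Set.ordConnected_Ici fun a _ ha _ => ?_
    simp [boxSumCount_zero, show a + 1 ≠ 0 by simp at ha; omega]
  | succ k ih =>
    refine antitoneOn_of_add_one_le Set.ordConnected_Ici fun a _ ha _ => ?_
    rw [Set.mem_Ici] at ha
    have key : boxSumCount m k (a + 1 + m) ≤ boxSumCount m k (a - m) := by
      rw [← boxSumCount_abs m k (a - m)]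
      exact ih (Set.mem_Ici.2 (abs_nonneg _)) (Set.mem_Ici.2 (by omega))
        (abs_le.2 ⟨by omega, by omega⟩)
    have := boxSumCount_succ_add_one_add m hm k a
    omega

theorem boxSumCount_le_of_abs_le (m : ℤ) (hm : 0 ≤ m) (k : ℕ) {s t : ℤ} (h : |s| ≤ |t|) :
    boxSumCount m k t ≤ boxSumCount m k s := by
  rw [← boxSumCount_abs m k s, ← boxSumCount_abs m k t]
  exact boxSumCount_antitoneOn_Ici_zero m hm k (abs_nonneg s) (abs_nonneg t) h

theorem balanced_rep_count_ge_extreme_general (p : ℕ)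
    (k : ℕ)
    (g : ℤ) (hg : g ∈ Finset.Icc (-(((p : ℤ) - 1) / 2)) (((p : ℤ) - 1) / 2)) :
    ((Fintype.piFinset (fun _ : Fin k =>
        Finset.Icc (-(((p : ℤ) - 1) / 2)) (((p : ℤ) - 1) / 2))).filter
      (fun f => ∑ i, f i = ((p : ℤ) - 1) / 2)).card ≤
    ((Fintype.piFinset (fun _ : Fin k =>
        Finset.Icc (-(((p : ℤ) - 1) / 2)) (((p : ℤ) - 1) / 2))).filter
      (fun f => ∑ i, f i = g)).card := by
  set m : ℤ := ((p : ℤ) - 1) / 2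
  obtain ⟨hlo, hhi⟩ := Finset.mem_Icc.1 hg
  have hm : 0 ≤ m := by omega
  have hgm : |g| ≤ |m| := by
    rw [abs_of_nonneg hm]
    exact abs_le.2 ⟨hlo, hhi⟩
  exact boxSumCount_le_of_abs_le m hm k hgm

theorem balanced_rep_count_ge_extreme (p : ℕ) (hp : p.Prime) (hodd : Odd p)
    (k : ℕ) (hk : 1 ≤ k)
    (g : ℤ) (hg : g ∈ Finset.Icc (-(((p : ℤ) - 1) / 2)) (((p : ℤ) - 1) / 2)) :
    ((Fintype.piFinset (fun _ : Fin k =>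
        Finset.Icc (-(((p : ℤ) - 1) / 2)) (((p : ℤ) - 1) / 2))).filter
      (fun f => ∑ i, f i = ((p : ℤ) - 1) / 2)).card ≤
    ((Fintype.piFinset (fun _ : Fin k =>
        Finset.Icc (-(((p : ℤ) - 1) / 2)) (((p : ℤ) - 1) / 2))).filter
      (fun f => ∑ i, f i = g)).card :=
  balanced_rep_count_ge_extreme_general p k g hg
end
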